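/- Let H_n^a(s) = ∫_0^∞ Ai(y+s)·h_n^a(y) dy for a > 0, s ∈ ℝ. Then for all n ≥ 1, the five-term recurrence (n-1)H_{n-2}^a - (4n-1+as-a³/4)H_{n-1}^a + (6n+3+2as+a³/2)H_n^a - (4n+5+as-a³/4)H_{n+1}^a + (n+2)H_{n+2}^a = 0 holds (with H_{-1}^a interpreted as 0 when n = 1). -/

import Mathlib

/-!
Put `ψ = h_{n+1} - 2h_n + h_{n-1}`. The Laguerre functions satisfy
`(h_{k+1} - h_k)' = -(a/2)(h_{k+1} + h_k)`, so `ψ` and `ψ'` are combinations of the `h_j`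
vanishing at `0` (all `h_j(0) = √a`), and so is `ψ''`. Green's identity on `[0, ∞)` together
with `Ai''(y + s) = (y + s) Ai(y + s)` gives `∫ Ai(y + s) (ψ'' - (y + s) ψ) dy = 0`. The
three-term recurrence `x L_k = (2k+1) L_k - (k+1) L_{k+1} - k L_{k-1}` turns `(y + s) ψ` into a
combination of the `h_j` as well, and the resulting five-term relation between the `H_j` is the
recurrence.
-/

open MeasureTheory Set Filter

/-- The Laguerre polynomials, defined by the three-term recurrence
`L_{k+1}(x) = ((2k+1-x)L_k(x) - k L_{k-1}(x))/(k+1)`, `L_0 = 1`, `L_1 = 1 - x`. -/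
noncomputable def laguerre : ℕ → ℝ → ℝ
  | 0, _ => 1
  | 1, x => 1 - x
  | (n + 2), x =>
      ((2 * (n : ℝ) + 3 - x) * laguerre (n + 1) x - ((n : ℝ) + 1) * laguerre n x)
        / ((n : ℝ) + 2)

/-- The scaled Laguerre functions `h_n^a(x) = √a · e^{-ax/2} · L_n(ax)`. -/
noncomputable def scaledLaguerre (a : ℝ) (n : ℕ) (x : ℝ) : ℝ :=
  Real.sqrt a * Real.exp (-a * x / 2) * laguerre n (a * x)

open Topology

theorem integral_Ioi_lagrange_identity {u u' u'' v v' v'' : ℝ → ℝ} {b : ℝ}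
    (hu : ∀ y ∈ Ici b, HasDerivAt u (u' y) y) (hu' : ∀ y ∈ Ici b, HasDerivAt u' (u'' y) y)
    (hv : ∀ y ∈ Ici b, HasDerivAt v (v' y) y) (hv' : ∀ y ∈ Ici b, HasDerivAt v' (v'' y) y)
    (hint : IntegrableOn (fun y => u y * v'' y - u'' y * v y) (Ioi b))
    (hlim : Tendsto (fun y => u y * v' y - u' y * v y) atTop (𝓝 0)) :
    ∫ y in Ioi b, (u y * v'' y - u'' y * v y) = u' b * v b - u b * v' b := by
  have hW : ∀ y ∈ Ici b, HasDerivAt (fun y => u y * v' y - u' y * v y)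
      (u y * v'' y - u'' y * v y) y := fun y hy =>
    (((hu y hy).mul (hv' y hy)).sub ((hu' y hy).mul (hv y hy))).congr_deriv (by ring)
  rw [integral_Ioi_of_hasDerivAt_of_tendsto' hW hint hlim]
  ring

theorem hasDerivAt_deriv_of_contDiff_two {f : ℝ → ℝ} (hf : ContDiff ℝ 2 f) (x : ℝ) :
    HasDerivAt (deriv f) (deriv (deriv f) x) x :=
  ((hf.iterate_deriv' 1 1).differentiable one_ne_zero x).hasDerivAt

theorem tendsto_zero_of_abs_add_abs {α : Type*} {l : Filter α} {f g : α → ℝ}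
    (h : Tendsto (fun t => |f t| + |g t|) l (𝓝 0)) :
    Tendsto f l (𝓝 0) ∧ Tendsto g l (𝓝 0) :=
  ⟨squeeze_zero_norm (fun t => le_add_of_nonneg_right (abs_nonneg (g t))) h,
    squeeze_zero_norm (fun t => le_add_of_nonneg_left (abs_nonneg (f t))) h⟩

theorem integral_Ioi_airy_mul_eq_zero {Ai : ℝ → ℝ} (hAi_smooth : ContDiff ℝ 2 Ai)
    (hAi_ode : ∀ x, deriv (deriv Ai) x = x * Ai x) (hAi_lim : Tendsto Ai atTop (𝓝 0))
    (hAi'_lim : Tendsto (deriv Ai) atTop (𝓝 0)) (s : ℝ) {v v' v'' : ℝ → ℝ}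
    (hv : ∀ y ∈ Ici 0, HasDerivAt v (v' y) y) (hv' : ∀ y ∈ Ici 0, HasDerivAt v' (v'' y) y)
    (hv_lim : Tendsto v atTop (𝓝 0)) (hv'_lim : Tendsto v' atTop (𝓝 0))
    (hv0 : v 0 = 0) (hv'0 : v' 0 = 0)
    (hint : IntegrableOn (fun y => Ai (y + s) * (v'' y - (y + s) * v y)) (Ioi 0)) :
    ∫ y in Ioi 0, Ai (y + s) * (v'' y - (y + s) * v y) = 0 := by
  have hshift : Tendsto (· + s) atTop atTop := tendsto_atTop_add_const_right _ s tendsto_id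
  have heq : (fun y => Ai (y + s) * v'' y - (y + s) * Ai (y + s) * v y)
      = fun y => Ai (y + s) * (v'' y - (y + s) * v y) := by
    ext y
    ring
  have h := integral_Ioi_lagrange_identity (u := fun y => Ai (y + s))
    (fun y _ => (hAi_smooth.differentiable two_ne_zero _).hasDerivAt.comp_add_const y s)
    (fun y _ => by
      simpa [hAi_ode] using (hasDerivAt_deriv_of_contDiff_two hAi_smooth _).comp_add_const y s)
    hv hv' (heq ▸ hint)
    (by simpa using ((hAi_lim.comp hshift).mul hv'_lim).sub ((hAi'_lim.comp hshift).mul hv_lim))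
  rw [heq, hv0, hv'0] at h
  simpa using h

theorem laguerre_recurrence (n : ℕ) (x : ℝ) :
    ((n : ℝ) + 2) * laguerre (n + 2) x
      = (2 * (n : ℝ) + 3 - x) * laguerre (n + 1) x - ((n : ℝ) + 1) * laguerre n x := by
  rw [laguerre]
  field_simp

theorem laguerre_at_zero : ∀ n, laguerre n 0 = 1
  | 0 => rfl
  | 1 => by simp [laguerre]
  | n + 2 => by
    have h := laguerre_recurrence n 0
    rw [laguerre_at_zero (n + 1), laguerre_at_zero n] at h
    have hn : (n : ℝ) + 2 ≠ 0 := by positivity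
    exact mul_left_cancel₀ hn (by linear_combination h)

-- At `k = 0` the truncated `k - 1` is harmless, its coefficient being `k`.
theorem mul_laguerre (k : ℕ) (x : ℝ) :
    x * laguerre k x = (2 * (k : ℝ) + 1) * laguerre k x - ((k : ℝ) + 1) * laguerre (k + 1) x
      - (k : ℝ) * laguerre (k - 1) x := by
  cases k with
  | zero => simp [laguerre]
  | succ j =>
    push_cast
    linear_combination laguerre_recurrence j x

open Polynomial in
theorem exists_eval_eq_laguerre : ∀ n, ∃ P : ℝ[X], ∀ x, P.eval x = laguerre n x
  | 0 => ⟨1, by simp [laguerre]⟩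
  | 1 => ⟨1 - X, by simp [laguerre]⟩
  | n + 2 => by
    obtain ⟨P, hP⟩ := exists_eval_eq_laguerre (n + 1)
    obtain ⟨Q, hQ⟩ := exists_eval_eq_laguerre n
    exact ⟨C ((n : ℝ) + 2)⁻¹ * ((C (2 * (n : ℝ) + 3) - X) * P - C ((n : ℝ) + 1) * Q),
      fun x => by simp [laguerre, hP, hQ, div_eq_inv_mul]⟩

open Polynomial in
theorem tendsto_laguerre_mul_exp_neg_atTop (n : ℕ) :
    Tendsto (fun x => laguerre n x * Real.exp (-x / 2)) atTop (𝓝 0) := by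
  obtain ⟨P, hP⟩ := exists_eval_eq_laguerre n
  have h := (Polynomial.tendsto_div_exp_atTop (P.comp (C 2 * X))).comp
    (tendsto_id.atTop_div_const (by norm_num : (0 : ℝ) < 2))
  refine h.congr fun x => ?_
  simp only [Function.comp_apply, id, eval_comp, eval_mul, eval_C, eval_X, ← hP,
    div_eq_mul_inv, ← Real.exp_neg]
  ring_nf

theorem mul_sum_range_laguerre (n : ℕ) (x : ℝ) :
    x * ∑ k ∈ Finset.range (n + 1), laguerre k x
      = ((n : ℝ) + 1) * (laguerre n x - laguerre (n + 1) x) := by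
  induction n with
  | zero => simp [laguerre]
  | succ n ih =>
    rw [Finset.sum_range_succ, mul_add, ih]
    push_cast
    linear_combination laguerre_recurrence n x

theorem hasDerivAt_laguerre :
    ∀ n x, HasDerivAt (laguerre n) (-∑ k ∈ Finset.range n, laguerre k x) x
  | 0, x => by simpa [laguerre] using hasDerivAt_const x (1 : ℝ)
  | 1, x => by simpa [laguerre] using (hasDerivAt_id x).const_sub 1
  | n + 2, x => by
    have hn : (n : ℝ) + 2 ≠ 0 := by positivity
    have h := ((((hasDerivAt_id x).const_sub (2 * (n : ℝ) + 3)).mul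
      (hasDerivAt_laguerre (n + 1) x)).sub
        ((hasDerivAt_laguerre n x).const_mul ((n : ℝ) + 1))).div_const ((n : ℝ) + 2)
    refine h.congr_deriv ?_
    have hx := mul_sum_range_laguerre n x
    simp only [id, Finset.sum_range_succ] at hx ⊢
    rw [div_eq_iff hn]
    linear_combination hx

section ScaledLaguerre

variable (a : ℝ)

theorem scaledLaguerre_at_zero (n : ℕ) : scaledLaguerre a n 0 = Real.sqrt a := by
  simp [scaledLaguerre, laguerre_at_zero]

theorem mul_scaledLaguerre (n : ℕ) (y : ℝ) :
    a * y * scaledLaguerre a n y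
      = (2 * (n : ℝ) + 1) * scaledLaguerre a n y - ((n : ℝ) + 1) * scaledLaguerre a (n + 1) y
        - (n : ℝ) * scaledLaguerre a (n - 1) y := by
  simp only [scaledLaguerre]
  linear_combination Real.sqrt a * Real.exp (-a * y / 2) * mul_laguerre n (a * y)

theorem hasDerivAt_scaledLaguerre (n : ℕ) (y : ℝ) :
    HasDerivAt (scaledLaguerre a n)
      (Real.sqrt a * Real.exp (-a * y / 2) *
        (-a * ∑ k ∈ Finset.range n, laguerre k (a * y) - a / 2 * laguerre n (a * y))) y := by
  have hexp : HasDerivAt (fun y => Real.exp (-a * y / 2)) (Real.exp (-a * y / 2) * (-a / 2)) y :=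
    (((hasDerivAt_id y).const_mul (-a)).div_const 2).exp.congr_deriv (by simp)
  have hlag := (hasDerivAt_laguerre n (a * y)).comp y ((hasDerivAt_id y).const_mul a)
  refine ((hexp.mul hlag).const_mul (Real.sqrt a)).congr_of_eventuallyEq ?_ |>.congr_deriv ?_
  · exact Eventually.of_forall fun t => by simp [scaledLaguerre, mul_assoc]
  · simp only [Function.comp_apply]
    ring

theorem hasDerivAt_scaledLaguerre_succ_sub (n : ℕ) (y : ℝ) :
    HasDerivAt (fun y => scaledLaguerre a (n + 1) y - scaledLaguerre a n y)
      (-(a / 2) * (scaledLaguerre a (n + 1) y + scaledLaguerre a n y)) y := by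
  refine ((hasDerivAt_scaledLaguerre a (n + 1) y).sub
    (hasDerivAt_scaledLaguerre a n y)).congr_deriv ?_
  rw [Finset.sum_range_succ]
  simp only [scaledLaguerre]
  ring

noncomputable def scaledLaguerreSecondDiff (p : ℕ) (y : ℝ) : ℝ :=
  (scaledLaguerre a (p + 2) y - scaledLaguerre a (p + 1) y)
    - (scaledLaguerre a (p + 1) y - scaledLaguerre a p y)

theorem scaledLaguerreSecondDiff_at_zero (p : ℕ) : scaledLaguerreSecondDiff a p 0 = 0 := by
  simp [scaledLaguerreSecondDiff, scaledLaguerre_at_zero]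

theorem hasDerivAt_scaledLaguerreSecondDiff (p : ℕ) (y : ℝ) :
    HasDerivAt (scaledLaguerreSecondDiff a p)
      (-(a / 2) * (scaledLaguerre a (p + 2) y - scaledLaguerre a p y)) y :=
  ((hasDerivAt_scaledLaguerre_succ_sub a (p + 1) y).sub
    (hasDerivAt_scaledLaguerre_succ_sub a p y)).congr_deriv (by ring)

theorem hasDerivAt_scaledLaguerre_add_two_sub (p : ℕ) (y : ℝ) :
    HasDerivAt (fun y => scaledLaguerre a (p + 2) y - scaledLaguerre a p y)
      (-(a / 2) * (scaledLaguerre a (p + 2) y + 2 * scaledLaguerre a (p + 1) y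
        + scaledLaguerre a p y)) y :=
  ((hasDerivAt_scaledLaguerre_succ_sub a (p + 1) y).add
    (hasDerivAt_scaledLaguerre_succ_sub a p y)).congr_of_eventuallyEq
      (Eventually.of_forall fun t => by simp only [Pi.add_apply]; ring) |>.congr_deriv (by ring)

-- `(a/2)^2 (h_{p+2} + 2 h_{p+1} + h_p)` is the second derivative of `scaledLaguerreSecondDiff a p`.
theorem airy_operator_scaledLaguerreSecondDiff (s : ℝ) (p : ℕ) (y : ℝ) :
    a * ((a / 2) ^ 2 * (scaledLaguerre a (p + 2) y + 2 * scaledLaguerre a (p + 1) y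
        + scaledLaguerre a p y) - (y + s) * scaledLaguerreSecondDiff a p y)
      = (p : ℝ) * scaledLaguerre a (p - 1) y
        - (4 * (p : ℝ) + 3 + a * s - a ^ 3 / 4) * scaledLaguerre a p y
        + (6 * (p : ℝ) + 9 + 2 * a * s + a ^ 3 / 2) * scaledLaguerre a (p + 1) y
        - (4 * (p : ℝ) + 9 + a * s - a ^ 3 / 4) * scaledLaguerre a (p + 2) y
        + ((p : ℝ) + 3) * scaledLaguerre a (p + 3) y := by
  have h2 := mul_scaledLaguerre a (p + 2) y
  have h1 := mul_scaledLaguerre a (p + 1) y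
  have h0 := mul_scaledLaguerre a p y
  simp only [Nat.add_sub_cancel] at h2 h1
  push_cast at h2 h1
  simp only [scaledLaguerreSecondDiff]
  linear_combination -h2 + 2 * h1 - h0

end ScaledLaguerre

theorem tendsto_scaledLaguerre_atTop {a : ℝ} (ha : 0 < a) (n : ℕ) :
    Tendsto (scaledLaguerre a n) atTop (𝓝 0) := by
  have h := ((tendsto_laguerre_mul_exp_neg_atTop n).comp
    (tendsto_id.const_mul_atTop ha)).const_mul (Real.sqrt a)
  rw [mul_zero] at h
  refine h.congr fun y => ?_
  simp only [Function.comp_apply, id, scaledLaguerre]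
  ring_nf

theorem tendsto_scaledLaguerreSecondDiff_atTop {a : ℝ} (ha : 0 < a) (p : ℕ) :
    Tendsto (scaledLaguerreSecondDiff a p) atTop (𝓝 0) := by
  have hh := tendsto_scaledLaguerre_atTop ha
  unfold scaledLaguerreSecondDiff
  simpa only [sub_self] using ((hh (p + 2)).sub (hh (p + 1))).sub ((hh (p + 1)).sub (hh p))

theorem integral_Ioi_airy_mul_scaledLaguerre_combination {Ai : ℝ → ℝ}
    (hAi_smooth : ContDiff ℝ 2 Ai) (hAi_ode : ∀ x, deriv (deriv Ai) x = x * Ai x)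
    (hAi_lim : Tendsto Ai atTop (𝓝 0)) (hAi'_lim : Tendsto (deriv Ai) atTop (𝓝 0))
    {a : ℝ} (ha : 0 < a) (s : ℝ) (p : ℕ)
    (hint : ∀ j, Integrable (fun y => Ai (y + s) * scaledLaguerre a j y)
      (volume.restrict (Ioi 0))) :
    ∫ y in Ioi 0, Ai (y + s) * ((p : ℝ) * scaledLaguerre a (p - 1) y
        - (4 * (p : ℝ) + 3 + a * s - a ^ 3 / 4) * scaledLaguerre a p y
        + (6 * (p : ℝ) + 9 + 2 * a * s + a ^ 3 / 2) * scaledLaguerre a (p + 1) y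
        - (4 * (p : ℝ) + 9 + a * s - a ^ 3 / 4) * scaledLaguerre a (p + 2) y
        + ((p : ℝ) + 3) * scaledLaguerre a (p + 3) y) = 0 := by
  simp_rw [← airy_operator_scaledLaguerreSecondDiff a s p, mul_left_comm _ a, integral_const_mul]
  set h := scaledLaguerre a
  set ψ := scaledLaguerreSecondDiff a p
  set ψ'' : ℝ → ℝ := fun y => (a / 2) ^ 2 * (h (p + 2) y + 2 * h (p + 1) y + h p y)
  have hψint : IntegrableOn (fun y => Ai (y + s) * (ψ'' y - (y + s) * ψ y)) (Ioi 0) := by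
    refine (integrable_const_mul_iff (isUnit_iff_ne_zero.mpr ha.ne') _).mp ?_
    simp_rw [ψ'', ψ, h, mul_left_comm a, airy_operator_scaledLaguerreSecondDiff a s p]
    simp only [mul_add, mul_sub, mul_left_comm (Ai _)]
    fun_prop
  have hh := tendsto_scaledLaguerre_atTop ha
  rw [integral_Ioi_airy_mul_eq_zero hAi_smooth hAi_ode hAi_lim hAi'_lim s
    (v := ψ) (v' := fun y => -(a / 2) * (h (p + 2) y - h p y)) (v'' := ψ'')
    (fun y _ => hasDerivAt_scaledLaguerreSecondDiff a p y)
    (fun y _ => ((hasDerivAt_scaledLaguerre_add_two_sub a p y).const_mul (-(a / 2))).congr_deriv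
      (by ring))
    (tendsto_scaledLaguerreSecondDiff_atTop ha p)
    (by simpa using ((hh (p + 2)).sub (hh p)).const_mul (-(a / 2)))
    (scaledLaguerreSecondDiff_at_zero a p) (by simp [h, scaledLaguerre_at_zero]) hψint, mul_zero]

/-- let `H_n^a(s) = ∫_0^∞ Ai(y+s)·h_n^a(y) dy`, where `Ai` is the Airy
function of the first kind (`Ai'' (x) = x·Ai(x)`, superexponentially decaying at `+∞`).
Then for all `n ≥ 1` the five-term recurrence
`(n-1)H_{n-2} - (4n-1+as-a³/4)H_{n-1} + (6n+3+2as+a³/2)H_n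
  - (4n+5+as-a³/4)H_{n+1} + (n+2)H_{n+2} = 0` holds. -/
theorem airy_scaledLaguerre_recurrence
    (Ai : ℝ → ℝ) (a s : ℝ) (ha : 0 < a)
    (hAi_smooth : ContDiff ℝ 2 Ai)
    (hAi_ode : ∀ x, deriv (deriv Ai) x = x * Ai x)
    (hAi_decay : ∀ k : ℕ, Tendsto (fun t => |t| ^ k * (|Ai t| + |deriv Ai t|))
      atTop (nhds 0))
    (H : ℕ → ℝ)
    (hH : ∀ n, H n = ∫ y in Ici (0:ℝ), Ai (y + s) * scaledLaguerre a n y)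
    (hH_int : ∀ n, IntegrableOn (fun y => Ai (y + s) * scaledLaguerre a n y) (Ici 0)) :
    ∀ n : ℕ, 1 ≤ n →
      ((n : ℝ) - 1) * H (n - 2)
        - (4 * (n : ℝ) - 1 + a * s - a ^ 3 / 4) * H (n - 1)
        + (6 * (n : ℝ) + 3 + 2 * a * s + a ^ 3 / 2) * H n
        - (4 * (n : ℝ) + 5 + a * s - a ^ 3 / 4) * H (n + 1)
        + ((n : ℝ) + 2) * H (n + 2) = 0 := by
  intro n hn
  obtain ⟨p, rfl⟩ : ∃ p, n = p + 1 := ⟨n - 1, by omega⟩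
  have hint : ∀ j, Integrable (fun y => Ai (y + s) * scaledLaguerre a j y)
      (volume.restrict (Ioi 0)) := fun j => (hH_int j).mono_set Ioi_subset_Ici_self
  have hHIoi : ∀ j, H j = ∫ y in Ioi 0, Ai (y + s) * scaledLaguerre a j y := fun j => by
    rw [hH j, integral_Ici_eq_integral_Ioi]
  have hAi_lim := tendsto_zero_of_abs_add_abs (by simpa using hAi_decay 0)
  have hrec := integral_Ioi_airy_mul_scaledLaguerre_combination hAi_smooth hAi_ode hAi_lim.1
    hAi_lim.2 ha s p hint
  simp (disch := fun_prop) only [mul_add, mul_sub, mul_left_comm (Ai _), integral_add,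
    integral_sub, integral_const_mul, ← hHIoi] at hrec
  rw [show p + 1 - 2 = p - 1 by omega, Nat.add_sub_cancel]
  push_cast
  linear_combination hrec
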